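/- Trace distance between tensor product states: Let ρ_i, σ_i ∈ S_d for i = 1, …, n, and set ρ^{(n)} = ρ_1 ⊗ … ⊗ ρ_n and σ^{(n)} = σ_1 ⊗ … ⊗ σ_n. Then 1 − exp(−(1/2)Σ_{i=1}^n d_tr²(ρ_i,σ_i)) ≤ d_tr(ρ^{(n)}, σ^{(n)}) ≤ Σ_{i=1}^n d_tr(ρ_i,σ_i). -/

import Mathlib

open scoped Matrix ComplexOrder
open Matrix

/-- The square root of a positive semidefinite matrix (as defined in Mathlib, Dec 2024). -/
noncomputable def Matrix.PosSemidef.sqrt {n 𝕜 : Type*} [Fintype n] [RCLike 𝕜] [DecidableEq n]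
    {A : Matrix n n 𝕜} (hA : A.PosSemidef) : Matrix n n 𝕜 :=
  hA.1.eigenvectorUnitary.1 * diagonal ((↑) ∘ (Real.sqrt ·) ∘ hA.1.eigenvalues) *
    (star hA.1.eigenvectorUnitary : Matrix n n 𝕜)

section Defs

variable {m : Type*}

/-- The trace norm `‖X‖₁ = tr √(XᴴX)`. -/
noncomputable def traceNorm [Fintype m] [DecidableEq m] (X : Matrix m m ℂ) : ℝ :=
  ((Matrix.posSemidef_conjTranspose_mul_self X).sqrt.trace).re

/-- The trace distance `d_tr(ρ,σ) = ‖ρ - σ‖₁ / 2`. -/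
noncomputable def trDist [Fintype m] [DecidableEq m] (ρ σ : Matrix m m ℂ) : ℝ :=
  traceNorm (ρ - σ) / 2

/-- A density matrix: positive semidefinite (hence Hermitian) with unit trace. -/
def IsDensityMatrix [Fintype m] (ρ : Matrix m m ℂ) : Prop :=
  ρ.PosSemidef ∧ ρ.trace = 1

/-- Apply a superoperator, given by its matrix representation
(rows/columns indexed by matrix entry positions), to a matrix. -/
noncomputable def appS [Fintype m] (S : Matrix (m × m) (m × m) ℂ) (ρ : Matrix m m ℂ) :
    Matrix m m ℂ :=
  Matrix.of fun i j => ∑ p : m × m, S (i, j) p * ρ p.1 p.2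

/-- The Choi matrix of a superoperator. -/
def choiMatrix [Fintype m] (S : Matrix (m × m) (m × m) ℂ) : Matrix (m × m) (m × m) ℂ :=
  Matrix.of fun p q => S (p.2, q.2) (p.1, q.1)

/-- Quantum channel: completely positive (positive semidefinite Choi matrix)
and trace preserving. -/
def IsQChannelM [Fintype m] (S : Matrix (m × m) (m × m) ℂ) : Prop :=
  (choiMatrix S).PosSemidef ∧ ∀ X : Matrix m m ℂ, (appS S X).trace = X.trace

/-- `expS t L` is the superoperator `e^{tL}`. -/
noncomputable def expS [Fintype m] [DecidableEq m] (t : ℝ) (L : Matrix (m × m) (m × m) ℂ) :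
    Matrix (m × m) (m × m) ℂ :=
  NormedSpace.exp ((t : ℂ) • L)

/-- A Liouvillian: `e^{tL}` is a quantum channel for every `t ≥ 0`. -/
def IsLiouvillianM [Fintype m] [DecidableEq m] (L : Matrix (m × m) (m × m) ℂ) : Prop :=
  ∀ t : ℝ, 0 ≤ t → IsQChannelM (expS t L)

/-- `lam` is the spectral gap of the Liouvillian `L`:
`lam = inf {|Re μ| : μ eigenvalue of L, Re μ < 0}` (and such an eigenvalue exists). -/
def IsGapOf [Fintype m] [DecidableEq m] (L : Matrix (m × m) (m × m) ℂ) (lam : ℝ) : Prop :=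
  (∃ μ ∈ spectrum ℂ L, μ.re < 0) ∧
  lam = sInf {r : ℝ | ∃ μ ∈ spectrum ℂ L, μ.re < 0 ∧ r = -μ.re}

/-- `Tφ` is the peripheral evolution `T_{φ,t} = Σ_{k : Re λ_k = 0} e^{tλ_k} P_k` of the
semigroup generated by `L`: it acts as `e^{tμ}` on each generalized eigenspace of `L` with
`Re μ = 0`, and as `0` on each generalized eigenspace with `Re μ < 0`. -/
def IsPeriphEvolAt [Fintype m] (L : Matrix (m × m) (m × m) ℂ) (t : ℝ)
    (Tφ : Matrix (m × m) (m × m) ℂ) : Prop :=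
  (∀ μ : ℂ, μ.re = 0 → ∀ v ∈ Module.End.maxGenEigenspace (Matrix.mulVecLin L) μ,
      Tφ.mulVec v = Complex.exp (t * μ) • v) ∧
  (∀ μ : ℂ, μ.re < 0 → ∀ v ∈ Module.End.maxGenEigenspace (Matrix.mulVecLin L) μ,
      Tφ.mulVec v = 0)

/-- `Tφ` is the peripheral projection `T_φ = Σ_{k : |μ_k| = 1} μ_k P_k` of the channel `T`:
it acts as `μ •` on each generalized eigenspace of `T` with `|μ| = 1`, and as `0` on each
generalized eigenspace with `|μ| < 1`. -/
def IsPeriphProjM [Fintype m] (T Tφ : Matrix (m × m) (m × m) ℂ) : Prop :=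
  (∀ μ : ℂ, ‖μ‖ = 1 → ∀ v ∈ Module.End.maxGenEigenspace (Matrix.mulVecLin T) μ,
      Tφ.mulVec v = μ • v) ∧
  (∀ μ : ℂ, ‖μ‖ < 1 → ∀ v ∈ Module.End.maxGenEigenspace (Matrix.mulVecLin T) μ,
      Tφ.mulVec v = 0)

/-- The trace-norm contraction `η_tr[T] = sup_ρ d_tr(T(ρ), Tφ(ρ))` over density matrices. -/
noncomputable def etaTR [Fintype m] [DecidableEq m] (T Tφ : Matrix (m × m) (m × m) ℂ) : ℝ :=
  ⨆ ρ : {ρ : Matrix m m ℂ // IsDensityMatrix ρ}, trDist (appS T ρ.1) (appS Tφ ρ.1)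

open scoped Classical in
/-- Matrix square root of a positive semidefinite matrix (junk value `0` otherwise). -/
noncomputable def msqrt [Fintype m] [DecidableEq m] (A : Matrix m m ℂ) : Matrix m m ℂ :=
  if h : A.PosSemidef then h.sqrt else 0

/-- The fidelity `F(ρ,σ) = tr √(√ρ σ √ρ)`. -/
noncomputable def fidelity [Fintype m] [DecidableEq m] (ρ σ : Matrix m m ℂ) : ℝ :=
  ((msqrt (msqrt ρ * σ * msqrt ρ)).trace).re

/-- The Bures distance `d_B(ρ,σ) = √(1 - F(ρ,σ))`. -/
noncomputable def buresDist [Fintype m] [DecidableEq m] (ρ σ : Matrix m m ℂ) : ℝ :=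
  Real.sqrt (1 - fidelity ρ σ)

/-- The Frobenius (Hilbert-Schmidt) norm `‖X‖₂ = √(tr XᴴX)`. -/
noncomputable def frobNorm [Fintype m] (X : Matrix m m ℂ) : ℝ :=
  Real.sqrt ((Xᴴ * X).trace.re)

/-- The operator (spectral) norm `‖A‖_∞`. -/
noncomputable def specNorm [Fintype m] [DecidableEq m] (A : Matrix m m ℂ) : ℝ :=
  ‖(Matrix.toEuclideanLin A).toContinuousLinearMap‖

/-- The superoperator norm `‖S‖_{2→2} = sup {‖S(X)‖₂ : ‖X‖₂ ≤ 1}` induced by the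
Frobenius norm. -/
noncomputable def superNorm22 [Fintype m] (S : Matrix (m × m) (m × m) ℂ) : ℝ :=
  ⨆ X : {X : Matrix m m ℂ // frobNorm X ≤ 1}, frobNorm (appS S X.1)

/-- The dual (Heisenberg-picture) superoperator `S*`, satisfying
`tr[A S*(B)] = tr[S(A) B]`. -/
def dualS [Fintype m] (S : Matrix (m × m) (m × m) ℂ) : Matrix (m × m) (m × m) ℂ :=
  Matrix.of fun p q => S (q.2, q.1) (p.2, p.1)

/-- Matrix representation of the superoperator `ρ ↦ A ρ B`. -/
def sandwichS [Fintype m] (A B : Matrix m m ℂ) : Matrix (m × m) (m × m) ℂ :=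
  Matrix.of fun p q => A p.1 q.1 * B q.2 p.2

/-- The Lindblad dissipator `ρ ↦ L ρ L† − (1/2)L†L ρ − (1/2)ρ L†L` in matrix
representation. -/
noncomputable def lindbladTermS [Fintype m] [DecidableEq m] (L : Matrix m m ℂ) :
    Matrix (m × m) (m × m) ℂ :=
  sandwichS L Lᴴ - (1 / 2 : ℂ) • sandwichS (Lᴴ * L) 1 - (1 / 2 : ℂ) • sandwichS 1 (Lᴴ * L)

/-- Tensor (Kronecker) product of two superoperators. -/
def kronS {m' : Type*} [Fintype m] [Fintype m'] (S : Matrix (m × m) (m × m) ℂ)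
    (S' : Matrix (m' × m') (m' × m') ℂ) :
    Matrix ((m × m') × (m × m')) ((m × m') × (m × m')) ℂ :=
  Matrix.of fun p q =>
    S (p.1.1, p.2.1) (q.1.1, q.2.1) * S' (p.1.2, p.2.2) (q.1.2, q.2.2)

end Defs

/-- `n`-fold tensor power `S^{⊗n}` of a superoperator on `M_d`. -/
noncomputable def tensorPowS (n : ℕ) {d : ℕ} (S : Matrix (Fin d × Fin d) (Fin d × Fin d) ℂ) :
    Matrix ((Fin n → Fin d) × (Fin n → Fin d)) ((Fin n → Fin d) × (Fin n → Fin d)) ℂ :=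
  Matrix.of fun p q => ∏ i, S (p.1 i, p.2 i) (q.1 i, q.2 i)

/-- `n`-fold tensor power `ρ^{⊗n}` of a matrix. -/
noncomputable def tensorPowM (n : ℕ) {d : ℕ} (ρ : Matrix (Fin d) (Fin d) ℂ) :
    Matrix (Fin n → Fin d) (Fin n → Fin d) ℂ :=
  Matrix.of fun x y => ∏ i, ρ (x i) (y i)

/-- Tensor product `A 0 ⊗ A 1 ⊗ … ⊗ A (n-1)` of a family of matrices. -/
noncomputable def tensorFamilyM {n d : ℕ} (A : Fin n → Matrix (Fin d) (Fin d) ℂ) :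
    Matrix (Fin n → Fin d) (Fin n → Fin d) ℂ :=
  Matrix.of fun x y => ∏ i, A i (x i) (y i)

/-!
Upper bound: `ρ^{(n)} - σ^{(n)}` telescopes into `n` hybrid products, the `k`-th having the
single factor `ρ_k - σ_k` and density matrices elsewhere. Tensoring the Jordan decomposition of
`ρ_k - σ_k` shows that such a product has trace norm `‖ρ_k - σ_k‖₁`, and the triangle inequality
for `‖·‖₁` concludes.

Lower bound: measure each factor with the Helstrom projection `Q_k` of `ρ_k - σ_k`. The outcome
distributions are products of Bernoulli laws with parameters `p_k = tr ρ_k Q_k` and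
`q_k = tr σ_k Q_k`, where `p_k - q_k = d_tr(ρ_k, σ_k)`. Measuring does not increase the trace
distance, total variation is at least `1 - BC` for the Bhattacharyya coefficient `BC`, and `BC`
factorises into `∏ (√(p_k q_k) + √((1 - p_k)(1 - q_k))) ≤ ∏ exp (-(p_k - q_k)² / 2)`.
-/

open scoped MatrixOrder Matrix.Norms.L2Operator

namespace Matrix

variable {m : Type*} [Fintype m] [DecidableEq m]

theorem PosSemidef.sqrt_eq_cfcSqrt {A : Matrix m m ℂ} (hA : A.PosSemidef) :
    hA.sqrt = CFC.sqrt A := by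
  rw [CFC.sqrt_eq_real_sqrt A hA.nonneg, cfcₙ_eq_cfc, hA.1.cfc_eq]
  rfl

theorem PosSemidef.trace_mul_nonneg {A B : Matrix m m ℂ} (hA : A.PosSemidef)
    (hB : B.PosSemidef) : 0 ≤ (A * B).trace := by
  obtain ⟨C, rfl⟩ := CStarAlgebra.nonneg_iff_eq_star_mul_self.mp hB.nonneg
  rw [← Matrix.mul_assoc, trace_mul_comm, ← Matrix.mul_assoc]
  exact (hA.mul_mul_conjTranspose_same C).trace_nonneg

theorem PosSemidef.trace_mul_eq_ofReal_re {A B : Matrix m m ℂ} (hA : A.PosSemidef)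
    (hB : B.PosSemidef) : (A * B).trace = ((A * B).trace.re : ℂ) :=
  Complex.ext rfl (Complex.nonneg_iff.mp (hA.trace_mul_nonneg hB)).2.symm

theorem IsHermitian.exists_jordanDecomposition {X : Matrix m m ℂ} (hX : X.IsHermitian) :
    ∃ P N Q : Matrix m m ℂ, P.PosSemidef ∧ N.PosSemidef ∧ P * N = 0 ∧ P - N = X ∧
      Q.PosSemidef ∧ (1 - Q).PosSemidef ∧ X * Q = P := by
  have hcont (f : ℝ → ℝ) : ContinuousOn f (spectrum ℝ X) :=
    X.finite_real_spectrum.continuousOn f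
  have hpsd (f : ℝ → ℝ) (hf : ∀ x, 0 ≤ f x) : (cfc f X).PosSemidef :=
    nonneg_iff_posSemidef.mp (cfc_nonneg fun x _ => hf x)
  refine ⟨cfc (max · 0) X, cfc (max (-·) 0) X, cfc (fun x => if 0 < x then 1 else 0) X,
    hpsd _ fun _ => le_max_right _ _, hpsd _ fun _ => le_max_right _ _, ?_, ?_,
    hpsd _ fun _ => by split_ifs <;> norm_num, ?_, ?_⟩
  · rw [← cfc_mul _ _ X (hcont _) (hcont _), ← cfc_zero ℝ X]
    refine cfc_congr fun x _ => ?_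
    rcases le_total x 0 with h | h <;> simp [h]
  · rw [← cfc_sub _ _ X (hcont _) (hcont _)]
    conv_rhs => rw [← cfc_id' ℝ X hX.isSelfAdjoint]
    exact cfc_congr fun x _ => max_zero_sub_max_neg_zero_eq_self x
  · rw [← cfc_one ℝ X hX.isSelfAdjoint, ← cfc_sub _ _ X (hcont _) (hcont _)]
    exact hpsd _ fun x => by split_ifs <;> norm_num
  · nth_rw 1 [← cfc_id' ℝ X hX.isSelfAdjoint]
    rw [← cfc_mul _ _ X (hcont _) (hcont _)]
    refine cfc_congr fun x _ => ?_
    split_ifs with h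
    · simp [h.le]
    · simp [not_lt.mp h]

end Matrix

section TraceNorm

open Matrix

variable {m : Type*} [DecidableEq m]

def binaryPOVM (Q : Matrix m m ℂ) (b : Bool) : Matrix m m ℂ :=
  if b then Q else 1 - Q

theorem binaryPOVM_posSemidef {Q : Matrix m m ℂ} (hQ : Q.PosSemidef) (h1Q : (1 - Q).PosSemidef)
    (b : Bool) : (binaryPOVM Q b).PosSemidef := by
  cases b <;> assumption

theorem sum_binaryPOVM (Q : Matrix m m ℂ) : ∑ b, binaryPOVM Q b = 1 := by
  simp [binaryPOVM]

variable [Fintype m]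

theorem traceNorm_sub_of_mul_eq_zero {P N : Matrix m m ℂ} (hP : P.PosSemidef)
    (hN : N.PosSemidef) (hPN : P * N = 0) :
    traceNorm (P - N) = P.trace.re + N.trace.re := by
  have hNP : N * P = 0 := by
    simpa [hP.1.eq, hN.1.eq] using congrArg conjTranspose hPN
  have hsq : (P - N)ᴴ * (P - N) = (P + N) * (P + N) := by
    rw [conjTranspose_sub, hP.1.eq, hN.1.eq]
    simp only [sub_mul, mul_sub, add_mul, mul_add, hPN, hNP]
    abel
  rw [traceNorm, PosSemidef.sqrt_eq_cfcSqrt, hsq, CFC.sqrt_mul_self _ (hP.add hN).nonneg,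
    trace_add, Complex.add_re]

theorem sum_abs_re_trace_mul_le_traceNorm {ι : Type*} [Fintype ι] {X : Matrix m m ℂ}
    (hX : X.IsHermitian) {M : ι → Matrix m m ℂ} (hM : ∀ i, (M i).PosSemidef)
    (hM_sum : ∑ i, M i = 1) :
    ∑ i, |(X * M i).trace.re| ≤ traceNorm X := by
  obtain ⟨P, N, -, hP, hN, hPN, rfl, -⟩ := hX.exists_jordanDecomposition
  calc ∑ i, |((P - N) * M i).trace.re|
      ≤ ∑ i, ((P * M i).trace.re + (N * M i).trace.re) := by
        refine Finset.sum_le_sum fun i _ => ?_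
        have hPi := Complex.nonneg_iff.mp (hP.trace_mul_nonneg (hM i))
        have hNi := Complex.nonneg_iff.mp (hN.trace_mul_nonneg (hM i))
        rw [sub_mul, trace_sub, Complex.sub_re, abs_le]
        constructor <;> linarith [hPi.1, hNi.1]
    _ = traceNorm (P - N) := by
        simp only [Finset.sum_add_distrib, ← Complex.re_sum, ← trace_sum, ← Finset.mul_sum,
          hM_sum, Matrix.mul_one, traceNorm_sub_of_mul_eq_zero hP hN hPN]

theorem re_trace_mul_sub_le_traceNorm {X Q : Matrix m m ℂ} (hX : X.IsHermitian)
    (hQ : Q.PosSemidef) (h1Q : (1 - Q).PosSemidef) :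
    (X * Q).trace.re - (X * (1 - Q)).trace.re ≤ traceNorm X := by
  have h := sum_abs_re_trace_mul_le_traceNorm hX (binaryPOVM_posSemidef hQ h1Q)
    (sum_binaryPOVM Q)
  simp only [Fintype.sum_bool, binaryPOVM, if_true, Bool.false_eq_true, if_false] at h
  linarith [le_abs_self (X * Q).trace.re, neg_abs_le (X * (1 - Q)).trace.re]

theorem Matrix.IsHermitian.exists_traceNorm_eq {X : Matrix m m ℂ} (hX : X.IsHermitian) :
    ∃ Q : Matrix m m ℂ, Q.PosSemidef ∧ (1 - Q).PosSemidef ∧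
      traceNorm X = (X * Q).trace.re - (X * (1 - Q)).trace.re := by
  obtain ⟨P, N, Q, hP, hN, hPN, hX_eq, hQ, h1Q, hXQ⟩ := hX.exists_jordanDecomposition
  refine ⟨Q, hQ, h1Q, ?_⟩
  rw [Matrix.mul_sub, Matrix.mul_one, hXQ, ← hX_eq, traceNorm_sub_of_mul_eq_zero hP hN hPN]
  simp

theorem traceNorm_sum_le {ι : Type*} (s : Finset ι) {X : ι → Matrix m m ℂ}
    (hX : ∀ i ∈ s, (X i).IsHermitian) :
    traceNorm (∑ i ∈ s, X i) ≤ ∑ i ∈ s, traceNorm (X i) := by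
  obtain ⟨Q, hQ, h1Q, hnorm⟩ :=
    (isSelfAdjoint_sum s fun i hi => (hX i hi).isSelfAdjoint).isHermitian.exists_traceNorm_eq
  simp only [hnorm, Finset.sum_mul, trace_sum, Complex.re_sum, ← Finset.sum_sub_distrib]
  exact Finset.sum_le_sum fun i hi => re_trace_mul_sub_le_traceNorm (hX i hi) hQ h1Q

theorem IsDensityMatrix.exists_trDist_eq {ρ σ : Matrix m m ℂ} (hρ : IsDensityMatrix ρ)
    (hσ : IsDensityMatrix σ) :
    ∃ Q : Matrix m m ℂ, Q.PosSemidef ∧ (1 - Q).PosSemidef ∧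
      trDist ρ σ = (ρ * Q).trace.re - (σ * Q).trace.re := by
  obtain ⟨Q, hQ, h1Q, hnorm⟩ := (hρ.1.1.sub hσ.1.1).exists_traceNorm_eq
  refine ⟨Q, hQ, h1Q, ?_⟩
  have htr : (ρ - σ).trace = 0 := by rw [trace_sub, hρ.2, hσ.2, sub_self]
  rw [trDist, hnorm, Matrix.mul_sub, Matrix.mul_one, trace_sub, htr, Matrix.sub_mul, trace_sub]
  simp only [Complex.sub_re, Complex.zero_re]
  ring

theorem IsDensityMatrix.re_trace_mul_mem_Icc {ρ Q : Matrix m m ℂ} (hρ : IsDensityMatrix ρ)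
    (hQ : Q.PosSemidef) (h1Q : (1 - Q).PosSemidef) : (ρ * Q).trace.re ∈ Set.Icc 0 1 := by
  have h := (Complex.nonneg_iff.mp (hρ.1.trace_mul_nonneg h1Q)).1
  rw [Matrix.mul_sub, Matrix.mul_one, trace_sub, hρ.2, Complex.sub_re, Complex.one_re] at h
  exact ⟨(Complex.nonneg_iff.mp (hρ.1.trace_mul_nonneg hQ)).1, by linarith⟩

theorem IsDensityMatrix.re_trace_mul_binaryPOVM {ρ : Matrix m m ℂ} (hρ : IsDensityMatrix ρ)
    (Q : Matrix m m ℂ) (b : Bool) :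
    (ρ * binaryPOVM Q b).trace.re =
      if b then (ρ * Q).trace.re else 1 - (ρ * Q).trace.re := by
  cases b <;> simp [binaryPOVM, Matrix.mul_sub, trace_sub, hρ.2]

end TraceNorm

section TensorFamily

variable {n d : ℕ}

open Matrix

theorem tensorFamilyM_mul (A B : Fin n → Matrix (Fin d) (Fin d) ℂ) :
    tensorFamilyM A * tensorFamilyM B = tensorFamilyM fun i => A i * B i := by
  ext x y
  simp only [mul_apply, tensorFamilyM, of_apply, Fintype.prod_sum, Finset.prod_mul_distrib]

theorem conjTranspose_tensorFamilyM (A : Fin n → Matrix (Fin d) (Fin d) ℂ) :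
    (tensorFamilyM A)ᴴ = tensorFamilyM fun i => (A i)ᴴ := by
  ext x y
  simp [tensorFamilyM, conjTranspose_apply, star_prod]

theorem trace_tensorFamilyM (A : Fin n → Matrix (Fin d) (Fin d) ℂ) :
    (tensorFamilyM A).trace = ∏ i, (A i).trace := by
  simp only [trace, diag, tensorFamilyM, of_apply, Fintype.prod_sum]

theorem sum_tensorFamilyM {κ : Type*} [Fintype κ]
    (F : Fin n → κ → Matrix (Fin d) (Fin d) ℂ) :
    ∑ x : Fin n → κ, tensorFamilyM (fun i => F i (x i)) =
      tensorFamilyM fun i => ∑ j, F i j := by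
  ext a b
  simp only [Matrix.sum_apply, tensorFamilyM, of_apply, Fintype.prod_sum]

theorem tensorFamilyM_one :
    tensorFamilyM (fun _ : Fin n => (1 : Matrix (Fin d) (Fin d) ℂ)) = 1 := by
  ext x y
  by_cases h : x = y
  · simp [tensorFamilyM, h, one_apply]
  · obtain ⟨i, hi⟩ := Function.ne_iff.mp h
    simpa [tensorFamilyM, one_apply, h] using Finset.prod_eq_zero (Finset.mem_univ i) (by simp [hi])

theorem tensorFamilyM_eq_zero {A : Fin n → Matrix (Fin d) (Fin d) ℂ} (k : Fin n)
    (hk : A k = 0) :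
    tensorFamilyM A = 0 := by
  ext x y
  exact Finset.prod_eq_zero (Finset.mem_univ k) (by simp [hk])

theorem tensorFamilyM_update_sub (A : Fin n → Matrix (Fin d) (Fin d) ℂ) (k : Fin n)
    (B C : Matrix (Fin d) (Fin d) ℂ) :
    tensorFamilyM (Function.update A k (B - C)) =
      tensorFamilyM (Function.update A k B) - tensorFamilyM (Function.update A k C) := by
  ext x y
  simp only [tensorFamilyM, of_apply, Matrix.sub_apply,
    Function.apply_update (fun i (M : Matrix (Fin d) (Fin d) ℂ) => M (x i) (y i)),
    Finset.prod_update_of_mem (Finset.mem_univ k), sub_mul]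

theorem Matrix.PosSemidef.tensorFamilyM {A : Fin n → Matrix (Fin d) (Fin d) ℂ}
    (hA : ∀ i, (A i).PosSemidef) : (tensorFamilyM A).PosSemidef := by
  choose B hB using fun i => CStarAlgebra.nonneg_iff_eq_star_mul_self.mp (hA i).nonneg
  have hA_eq : A = fun i => (B i)ᴴ * B i := funext hB
  rw [hA_eq, ← tensorFamilyM_mul, ← conjTranspose_tensorFamilyM]
  exact posSemidef_conjTranspose_mul_self _

theorem Matrix.IsHermitian.tensorFamilyM {A : Fin n → Matrix (Fin d) (Fin d) ℂ}
    (hA : ∀ i, (A i).IsHermitian) : (tensorFamilyM A).IsHermitian := by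
  rw [IsHermitian, conjTranspose_tensorFamilyM]
  exact congrArg _ (funext hA)

theorem trace_tensorFamilyM_update {A : Fin n → Matrix (Fin d) (Fin d) ℂ}
    (hA : ∀ i, (A i).trace = 1) (k : Fin n) (B : Matrix (Fin d) (Fin d) ℂ) :
    (tensorFamilyM (Function.update A k B)).trace = B.trace := by
  simp only [trace_tensorFamilyM, Function.apply_update (fun _ => trace),
    Finset.prod_update_of_mem (Finset.mem_univ k), hA, Finset.prod_const_one, mul_one]

theorem traceNorm_tensorFamilyM_update {A : Fin n → Matrix (Fin d) (Fin d) ℂ}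
    (hA : ∀ i, IsDensityMatrix (A i)) (k : Fin n) {Y : Matrix (Fin d) (Fin d) ℂ}
    (hY : Y.IsHermitian) : traceNorm (tensorFamilyM (Function.update A k Y)) = traceNorm Y := by
  obtain ⟨P, N, -, hP, hN, hPN, rfl, -⟩ := hY.exists_jordanDecomposition
  have hpsd {M : Matrix (Fin d) (Fin d) ℂ} (hM : M.PosSemidef) :
      (tensorFamilyM (Function.update A k M)).PosSemidef :=
    PosSemidef.tensorFamilyM fun i => by
      rcases eq_or_ne i k with rfl | hik
      · simpa using hM
      · simpa [hik] using (hA i).1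
  have hmul : tensorFamilyM (Function.update A k P) * tensorFamilyM (Function.update A k N) = 0 :=
    tensorFamilyM_mul _ _ ▸ tensorFamilyM_eq_zero k (by simpa using hPN)
  rw [tensorFamilyM_update_sub, traceNorm_sub_of_mul_eq_zero (hpsd hP) (hpsd hN) hmul,
    traceNorm_sub_of_mul_eq_zero hP hN hPN, trace_tensorFamilyM_update (fun i => (hA i).2),
    trace_tensorFamilyM_update (fun i => (hA i).2)]

theorem re_trace_tensorFamilyM_mul_tensorFamilyM {A B : Fin n → Matrix (Fin d) (Fin d) ℂ}
    (hA : ∀ i, (A i).PosSemidef) (hB : ∀ i, (B i).PosSemidef) :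
    (tensorFamilyM A * tensorFamilyM B).trace.re = ∏ i, (A i * B i).trace.re := by
  rw [tensorFamilyM_mul, trace_tensorFamilyM,
    Finset.prod_congr rfl fun i _ => (hA i).trace_mul_eq_ofReal_re (hB i), ← Complex.ofReal_prod,
    Complex.ofReal_re]

theorem tensorFamilyM_sub_tensorFamilyM (A B : Fin n → Matrix (Fin d) (Fin d) ℂ) :
    tensorFamilyM A - tensorFamilyM B =
      ∑ k, tensorFamilyM
        (Function.update (fun i => if i < k then B i else A i) k (A k - B k)) := by
  set hybrid : ℕ → Fin n → Matrix (Fin d) (Fin d) ℂ :=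
    fun j i => if (i : ℕ) < j then B i else A i
  have hstep (k : Fin n) :
      tensorFamilyM (Function.update (fun i => if i < k then B i else A i) k (A k - B k)) =
        tensorFamilyM (hybrid k) - tensorFamilyM (hybrid (k + 1)) := by
    rw [tensorFamilyM_update_sub]
    congr 2 <;> funext i <;> rcases eq_or_ne i k with rfl | hik
    · simp [hybrid]
    · simp [hybrid, hik]
    · simp [hybrid]
    · have : (i : ℕ) < k + 1 ↔ i < k := by rw [Fin.lt_def]; have := Fin.val_ne_of_ne hik; omega
      simp [hybrid, hik, this]
  have h0 : hybrid 0 = A := by funext i; simp [hybrid]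
  have hn : hybrid n = B := by funext i; simp [hybrid]
  simp only [hstep, Fin.sum_univ_eq_sum_range (fun k => tensorFamilyM (hybrid k) -
    tensorFamilyM (hybrid (k + 1))), Finset.sum_range_sub', h0, hn]

theorem traceNorm_tensorFamilyM_sub_le {ρ σ : Fin n → Matrix (Fin d) (Fin d) ℂ}
    (hρ : ∀ i, IsDensityMatrix (ρ i)) (hσ : ∀ i, IsDensityMatrix (σ i)) :
    traceNorm (tensorFamilyM ρ - tensorFamilyM σ) ≤ ∑ i, traceNorm (ρ i - σ i) := by
  have hhybrid (k : Fin n) (i : Fin n) : IsDensityMatrix (if i < k then σ i else ρ i) := by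
    split_ifs
    exacts [hσ i, hρ i]
  have hdiff (k : Fin n) : (ρ k - σ k).IsHermitian := (hρ k).1.1.sub (hσ k).1.1
  rw [tensorFamilyM_sub_tensorFamilyM]
  refine (traceNorm_sum_le _ fun k _ => Matrix.IsHermitian.tensorFamilyM fun i => ?_).trans
    (Finset.sum_le_sum fun k _ => (traceNorm_tensorFamilyM_update (hhybrid k) k (hdiff k)).le)
  rcases eq_or_ne i k with rfl | hik
  · simpa using hdiff i
  · simpa [hik] using (hhybrid k i).1.1

end TensorFamily

section Bernoulli

variable {ι : Type*} [Fintype ι]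

def bernoulliProd (p : ι → ℝ) (x : ι → Bool) : ℝ :=
  ∏ i, if x i then p i else 1 - p i

theorem sum_prod_apply_bool [DecidableEq ι] {R : Type*} [CommSemiring R] (f : ι → Bool → R) :
    ∑ x : ι → Bool, ∏ i, f i (x i) = ∏ i, (f i true + f i false) := by
  simp only [← Fintype.prod_sum, Fintype.sum_bool]

theorem sum_bernoulliProd [DecidableEq ι] (p : ι → ℝ) : ∑ x, bernoulliProd p x = 1 :=
  calc ∑ x, bernoulliProd p x = ∏ i, (p i + (1 - p i)) :=
        sum_prod_apply_bool fun i b => if b then p i else 1 - p i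
    _ = 1 := by simp

theorem bernoulliProd_nonneg {p : ι → ℝ} (hp : ∀ i, p i ∈ Set.Icc 0 1) (x : ι → Bool) :
    0 ≤ bernoulliProd p x :=
  Finset.prod_nonneg fun i _ => by split_ifs <;> linarith [(hp i).1, (hp i).2]

theorem sum_sqrt_bernoulliProd_mul [DecidableEq ι] {p q : ι → ℝ}
    (hp : ∀ i, p i ∈ Set.Icc 0 1) (hq : ∀ i, q i ∈ Set.Icc 0 1) :
    ∑ x, √(bernoulliProd p x * bernoulliProd q x) =
      ∏ i, (√(p i * q i) + √((1 - p i) * (1 - q i))) := by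
  have hsqrt (x : ι → Bool) : √(bernoulliProd p x * bernoulliProd q x) =
      ∏ i, √((if x i then p i else 1 - p i) * (if x i then q i else 1 - q i)) := by
    rw [bernoulliProd, bernoulliProd, ← Finset.prod_mul_distrib]
    exact Real.sqrt_prod _ fun i _ => by
      split_ifs <;> nlinarith [(hp i).1, (hp i).2, (hq i).1, (hq i).2]
  simp only [hsqrt]
  exact sum_prod_apply_bool fun i b =>
    √((if b then p i else 1 - p i) * (if b then q i else 1 - q i))

theorem sqrt_mul_add_sqrt_mul_le_exp {p q : ℝ} (hp : p ∈ Set.Icc 0 1) (hq : q ∈ Set.Icc 0 1) :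
    √(p * q) + √((1 - p) * (1 - q)) ≤ Real.exp (-(p - q) ^ 2 / 2) := by
  obtain ⟨hp0, hp1⟩ := hp
  obtain ⟨hq0, hq1⟩ := hq
  set s := √(p * q)
  set t := √((1 - p) * (1 - q))
  have hs : s ^ 2 = p * q := Real.sq_sqrt (by positivity)
  have ht : t ^ 2 = (1 - p) * (1 - q) := Real.sq_sqrt (by nlinarith)
  -- AM-GM applied to `(s t)² = p (1 - p) · q (1 - q)`
  have hst : 2 * (s * t) ≤ p * (1 - p) + q * (1 - q) := by
    have h : (2 * (s * t)) ^ 2 ≤ (p * (1 - p) + q * (1 - q)) ^ 2 := by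
      rw [mul_pow, mul_pow, hs, ht]
      nlinarith [sq_nonneg (p * (1 - p) - q * (1 - q))]
    exact (pow_le_pow_iff_left₀ (by positivity) (by nlinarith) two_ne_zero).mp h
  have hsq : (s + t) ^ 2 ≤ Real.exp (-(p - q) ^ 2 / 2) ^ 2 :=
    calc (s + t) ^ 2 ≤ 1 - (p - q) ^ 2 := by nlinarith
      _ ≤ Real.exp (-(p - q) ^ 2) := by linarith [Real.add_one_le_exp (-(p - q) ^ 2)]
      _ = Real.exp (-(p - q) ^ 2 / 2) ^ 2 := by rw [← Real.exp_nat_mul]; ring_nf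
  exact (pow_le_pow_iff_left₀ (by positivity) (by positivity) two_ne_zero).mp hsq

theorem one_sub_sum_sqrt_mul_le_sum_abs_sub {α : Type*} [Fintype α] {a b : α → ℝ}
    (ha : ∀ x, 0 ≤ a x) (hb : ∀ x, 0 ≤ b x) (ha_sum : ∑ x, a x = 1)
    (hb_sum : ∑ x, b x = 1) :
    1 - ∑ x, √(a x * b x) ≤ (∑ x, |a x - b x|) / 2 := by
  have hmin (x : α) : min (a x) (b x) ≤ √(a x * b x) :=
    Real.le_sqrt_of_sq_le (by
      rw [sq]
      exact mul_le_mul (min_le_left _ _) (min_le_right _ _) (le_min (ha x) (hb x)) (ha x))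
  have habs (x : α) : |a x - b x| = a x + b x - 2 * min (a x) (b x) := by
    rw [← max_sub_min_eq_abs']
    linarith [min_add_max (a x) (b x)]
  rw [Finset.sum_congr rfl fun x _ => habs x, Finset.sum_sub_distrib, Finset.sum_add_distrib,
    ha_sum, hb_sum, ← Finset.mul_sum]
  linarith [Finset.sum_le_sum fun x (_ : x ∈ Finset.univ) => hmin x]

theorem one_sub_exp_le_sum_abs_bernoulliProd_sub [DecidableEq ι] {p q : ι → ℝ}
    (hp : ∀ i, p i ∈ Set.Icc 0 1) (hq : ∀ i, q i ∈ Set.Icc 0 1) :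
    1 - Real.exp (-(1 / 2 * ∑ i, (p i - q i) ^ 2)) ≤
      (∑ x, |bernoulliProd p x - bernoulliProd q x|) / 2 :=
  calc 1 - Real.exp (-(1 / 2 * ∑ i, (p i - q i) ^ 2))
      = 1 - ∏ i, Real.exp (-(p i - q i) ^ 2 / 2) := by
        rw [← Real.exp_sum, Finset.mul_sum, ← Finset.sum_neg_distrib]
        ring_nf
    _ ≤ 1 - ∏ i, (√(p i * q i) + √((1 - p i) * (1 - q i))) := by
        gcongr with i
        exact sqrt_mul_add_sqrt_mul_le_exp (hp i) (hq i)
    _ = 1 - ∑ x, √(bernoulliProd p x * bernoulliProd q x) := by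
        rw [sum_sqrt_bernoulliProd_mul hp hq]
    _ ≤ (∑ x, |bernoulliProd p x - bernoulliProd q x|) / 2 :=
        one_sub_sum_sqrt_mul_le_sum_abs_sub (bernoulliProd_nonneg hp) (bernoulliProd_nonneg hq)
          (sum_bernoulliProd p) (sum_bernoulliProd q)

end Bernoulli

theorem one_sub_exp_le_trDist_tensorFamilyM {n d : ℕ}
    {ρ σ : Fin n → Matrix (Fin d) (Fin d) ℂ}
    (hρ : ∀ i, IsDensityMatrix (ρ i)) (hσ : ∀ i, IsDensityMatrix (σ i)) :
    1 - Real.exp (-(1 / 2 * ∑ i, trDist (ρ i) (σ i) ^ 2)) ≤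
      trDist (tensorFamilyM ρ) (tensorFamilyM σ) := by
  choose Q hQ h1Q hdist using fun i => (hρ i).exists_trDist_eq (hσ i)
  set M : (Fin n → Bool) → Matrix (Fin n → Fin d) (Fin n → Fin d) ℂ :=
    fun x => tensorFamilyM fun i => binaryPOVM (Q i) (x i)
  have hM (x : Fin n → Bool) (i : Fin n) : (binaryPOVM (Q i) (x i)).PosSemidef :=
    binaryPOVM_posSemidef (hQ i) (h1Q i) (x i)
  have hM_sum : ∑ x, M x = 1 := by
    simp only [M, sum_tensorFamilyM, sum_binaryPOVM, tensorFamilyM_one]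
  have hprob {τ : Fin n → Matrix (Fin d) (Fin d) ℂ} (hτ : ∀ i, IsDensityMatrix (τ i))
      (x : Fin n → Bool) :
      (tensorFamilyM τ * M x).trace.re = bernoulliProd (fun i => (τ i * Q i).trace.re) x := by
    rw [re_trace_tensorFamilyM_mul_tensorFamilyM (fun i => (hτ i).1) (hM x)]
    simp only [(hτ _).re_trace_mul_binaryPOVM, bernoulliProd]
  have hX : (tensorFamilyM ρ - tensorFamilyM σ).IsHermitian :=
    (Matrix.IsHermitian.tensorFamilyM fun i => (hρ i).1.1).sub
      (Matrix.IsHermitian.tensorFamilyM fun i => (hσ i).1.1)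
  calc 1 - Real.exp (-(1 / 2 * ∑ i, trDist (ρ i) (σ i) ^ 2))
      = 1 - Real.exp (-(1 / 2 * ∑ i, ((ρ i * Q i).trace.re - (σ i * Q i).trace.re) ^ 2)) := by
        simp only [hdist]
    _ ≤ (∑ x, |bernoulliProd (fun i => (ρ i * Q i).trace.re) x -
          bernoulliProd (fun i => (σ i * Q i).trace.re) x|) / 2 :=
        one_sub_exp_le_sum_abs_bernoulliProd_sub
          (fun i => (hρ i).re_trace_mul_mem_Icc (hQ i) (h1Q i))
          (fun i => (hσ i).re_trace_mul_mem_Icc (hQ i) (h1Q i))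
    _ = (∑ x, |((tensorFamilyM ρ - tensorFamilyM σ) * M x).trace.re|) / 2 := by
        simp only [Matrix.sub_mul, Matrix.trace_sub, Complex.sub_re, hprob hρ, hprob hσ]
    _ ≤ trDist (tensorFamilyM ρ) (tensorFamilyM σ) := by
        rw [trDist]
        gcongr
        exact sum_abs_re_trace_mul_le_traceNorm hX
          (fun x => Matrix.PosSemidef.tensorFamilyM (hM x)) hM_sum

/-- **Trace distance between tensor product states.** -/
theorem trace_tensor_product_bounds {d n : ℕ}
    (ρ σ : Fin n → Matrix (Fin d) (Fin d) ℂ)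
    (hρ : ∀ i, IsDensityMatrix (ρ i)) (hσ : ∀ i, IsDensityMatrix (σ i)) :
    1 - Real.exp (-(1 / 2 * ∑ i, trDist (ρ i) (σ i) ^ 2)) ≤
        trDist (tensorFamilyM ρ) (tensorFamilyM σ) ∧
    trDist (tensorFamilyM ρ) (tensorFamilyM σ) ≤ ∑ i, trDist (ρ i) (σ i) := by
  refine ⟨one_sub_exp_le_trDist_tensorFamilyM hρ hσ, ?_⟩
  simp only [trDist, ← Finset.sum_div]
  gcongr
  exact traceNorm_tensorFamilyM_sub_le hρ hσ
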